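/- Let g be a 2-step nilpotent real Lie algebra (i.e. [[g,g],g] = 0 and g is not abelian, or more generally [[x,y],z] = 0 for all x,y,z ∈ g) equipped with an abelian complex product structure {J,E}, i.e. a complex product structure whose eigenspace subalgebras g₊ and g₋ are both abelian (equivalently, [Jx,Jy] = [x,y] for all x,y ∈ g). Then the associated torsion-free connection ∇ is flat: R(x,y) = ∇ₓ∇ᵧ − ∇ᵧ∇ₓ − ∇_{[x,y]} = 0 for all x,y ∈ g. -/

import Mathlib

open Module LinearMap

variable {g : Type*} [LieRing g] [LieAlgebra ℝ g]

/-- A complex structure on a real Lie algebra: `J² = -id` and integrability. -/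
def IsComplexStr (J : Module.End ℝ g) : Prop :=
  (∀ x : g, J (J x) = -x) ∧
  (∀ x y : g, J ⁅x, y⁆ = ⁅J x, y⁆ + ⁅x, J y⁆ + J ⁅J x, J y⁆)

/-- A product structure on a real Lie algebra: `E² = id`, `E ≠ ±id` and integrability. -/
def IsProductStr (E : Module.End ℝ g) : Prop :=
  (∀ x : g, E (E x) = x) ∧ E ≠ LinearMap.id ∧ E ≠ -LinearMap.id ∧
  (∀ x y : g, E ⁅x, y⁆ = ⁅E x, y⁆ + ⁅x, E y⁆ - E ⁅E x, E y⁆)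

/-- A complex product structure: a complex structure and a product structure
that anticommute. -/
def IsCPS (J E : Module.End ℝ g) : Prop :=
  IsComplexStr J ∧ IsProductStr E ∧ ∀ x : g, J (E x) = -E (J x)

/-- The +1-eigenspace `g₊` of a product structure. -/
def posPart (E : Module.End ℝ g) : Submodule ℝ g where
  carrier := {x | E x = x}
  zero_mem' := by simp
  add_mem' := by
    intro a b ha hb
    simp only [Set.mem_setOf_eq, map_add] at *
    rw [ha, hb]
  smul_mem' := by
    intro c a ha
    simp only [Set.mem_setOf_eq, map_smul] at *
    rw [ha]

/-- The −1-eigenspace `g₋` of a product structure. -/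
def negPart (E : Module.End ℝ g) : Submodule ℝ g where
  carrier := {x | E x = -x}
  zero_mem' := by simp
  add_mem' := by
    intro a b ha hb
    simp only [Set.mem_setOf_eq, map_add] at *
    rw [ha, hb]; abel
  smul_mem' := by
    intro c a ha
    simp only [Set.mem_setOf_eq, map_smul] at *
    rw [ha, smul_neg]

/-- The projection `π₊ : g → g₊` associated to a product structure. -/
noncomputable def pplus (E : Module.End ℝ g) : Module.End ℝ g :=
  (1 / 2 : ℝ) • (LinearMap.id + E)

/-- The projection `π₋ : g → g₋` associated to a product structure. -/
noncomputable def pminus (E : Module.End ℝ g) : Module.End ℝ g :=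
  (1 / 2 : ℝ) • (LinearMap.id - E)

attribute [local instance 100] LieRing.ofAssociativeRing LieAlgebra.ofAssociativeAlgebra

/-- Auxiliary: the linear map `x ↦ A ∘ ad(P x) ∘ B`. -/
noncomputable def connTerm (A B P : Module.End ℝ g) : g →ₗ[ℝ] Module.End ℝ g :=
  (LinearMap.llcomp ℝ g g g A ∘ₗ LinearMap.lcomp ℝ g B) ∘ₗ
    (LieAlgebra.ad ℝ g).toLinearMap ∘ₗ P

/-- The torsion-free connection associated to a complex product structure `{J, E}`.
Its value `cpConn J E x y` equals
`−π₊ J ⁅π₊x, J π₊y⁆ − π₋ J ⁅π₋x, J π₋y⁆ + π₋ ⁅π₊x, π₋y⁆ + π₊ ⁅π₋x, π₊y⁆`,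
which encodes the defining identities `∇_{x₊} y₊ = −π₊ J ⁅x₊, J y₊⁆`,
`∇_{x₋} y₋ = −π₋ J ⁅x₋, J y₋⁆`, `∇_{x₊} y₋ = π₋ ⁅x₊, y₋⁆`, `∇_{x₋} y₊ = π₊ ⁅x₋, y₊⁆`. -/
noncomputable def cpConn (J E : Module.End ℝ g) : g →ₗ[ℝ] Module.End ℝ g :=
  -connTerm (pplus E ∘ₗ J) (J ∘ₗ pplus E) (pplus E)
    - connTerm (pminus E ∘ₗ J) (J ∘ₗ pminus E) (pminus E)
    + connTerm (pminus E) (pminus E) (pplus E)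
    + connTerm (pplus E) (pplus E) (pminus E)

/-- Pointwise formula for `cpConn`. -/
lemma cpConn_apply' (J E : Module.End ℝ g) (x w : g) :
    cpConn J E x w =
      -(pplus E (J ⁅pplus E x, J (pplus E w)⁆))
      - pminus E (J ⁅pminus E x, J (pminus E w)⁆)
      + pminus E ⁅pplus E x, pminus E w⁆
      + pplus E ⁅pminus E x, pplus E w⁆ := by
  simp [cpConn, connTerm, LieAlgebra.ad_apply]

/-- Let `g` be a 2-step nilpotent real Lie algebra (`⁅⁅x,y⁆,z⁆ = 0` for all
`x,y,z`) with an abelian complex product structure `{J,E}`, i.e. a complex product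
structure whose eigenspace subalgebras `g₊` and `g₋` are both abelian.  Then the
associated torsion-free connection `∇ = cpConn J E` is flat:
`R(x,y) = ∇ₓ∇ᵧ − ∇ᵧ∇ₓ − ∇_{⁅x,y⁆} = 0` for all `x,y ∈ g`. -/
theorem abelian_cps_two_step_flat
    (h2step : ∀ x y z : g, ⁅⁅x, y⁆, z⁆ = 0)
    (J E : Module.End ℝ g) (h : IsCPS J E)
    (hpos : ∀ x ∈ posPart E, ∀ y ∈ posPart E, ⁅x, y⁆ = 0)
    (hneg : ∀ x ∈ negPart E, ∀ y ∈ negPart E, ⁅x, y⁆ = 0) :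
    ∀ x y : g,
      cpConn J E x ∘ₗ cpConn J E y - cpConn J E y ∘ₗ cpConn J E x
        - cpConn J E ⁅x, y⁆ = 0 := by
  obtain ⟨⟨hJ2, hJint⟩, ⟨hE2, -, -, hEint⟩, hJE⟩ := h
  -- basic facts about the projections
  have hp_apply : ∀ x : g, pplus E x = (1 / 2 : ℝ) • (x + E x) := by
    intro x; simp [pplus]
  have hm_apply : ∀ x : g, pminus E x = (1 / 2 : ℝ) • (x - E x) := by
    intro x; simp [pminus]
  have hEp : ∀ x : g, E (pplus E x) = pplus E x := by
    intro x
    rw [hp_apply, map_smul, map_add, hE2, add_comm]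
  have hEm : ∀ x : g, E (pminus E x) = -(pminus E x) := by
    intro x
    rw [hm_apply, map_smul, map_sub, hE2, ← smul_neg, neg_sub]
  have hsum : ∀ x : g, pplus E x + pminus E x = x := by
    intro x
    rw [hp_apply, hm_apply]
    module
  -- J maps the eigenspaces to each other
  have hJp : ∀ p : g, E p = p → E (J p) = -(J p) := by
    intro p hp
    have h := hJE p
    rw [hp] at h
    exact neg_eq_iff_eq_neg.mp h.symm
  have hJm : ∀ q : g, E q = -q → E (J q) = J q := by
    intro q hq
    have h := hJE q
    rw [hq, map_neg] at h
    exact (neg_injective h).symm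
  -- membership translations
  have memP : ∀ p : g, E p = p → p ∈ posPart E := fun p hp => hp
  have memM : ∀ q : g, E q = -q → q ∈ negPart E := fun q hq => hq
  -- the "abelian complex structure" identity ⁅Jx, y⁆ = -⁅x, Jy⁆
  have hA : ∀ p r : g, E p = p → E r = r → ⁅J p, r⁆ = -⁅p, J r⁆ := by
    intro p r hp hr
    have h1 : ⁅p, r⁆ = 0 := hpos p (memP p hp) r (memP r hr)
    have h2 : ⁅J p, J r⁆ = 0 :=
      hneg (J p) (memM _ (hJp p hp)) (J r) (memM _ (hJp r hr))
    have h3 := hJint p r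
    rw [h1, h2, map_zero, add_zero] at h3
    exact eq_neg_of_add_eq_zero_left h3.symm
  have hB : ∀ q s : g, E q = -q → E s = -s → ⁅J q, s⁆ = -⁅q, J s⁆ := by
    intro q s hq hs
    have h1 : ⁅q, s⁆ = 0 := hneg q (memM q hq) s (memM s hs)
    have h2 : ⁅J q, J s⁆ = 0 :=
      hpos (J q) (memP _ (hJm q hq)) (J s) (memP _ (hJm s hs))
    have h3 := hJint q s
    rw [h1, h2, map_zero, add_zero] at h3
    exact eq_neg_of_add_eq_zero_left h3.symm
  have hC : ∀ p s : g, E p = p → E s = -s → ⁅J p, s⁆ = -⁅p, J s⁆ := by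
    intro p s hp hs
    have h1 : ⁅J p, s⁆ = 0 := hneg (J p) (memM _ (hJp p hp)) s (memM s hs)
    have h2 : ⁅p, J s⁆ = 0 := hpos p (memP p hp) (J s) (memP _ (hJm s hs))
    rw [h1, h2, neg_zero]
  have hD : ∀ q r : g, E q = -q → E r = r → ⁅J q, r⁆ = -⁅q, J r⁆ := by
    intro q r hq hr
    have h1 : ⁅J q, r⁆ = 0 := hpos (J q) (memP _ (hJm q hq)) r (memP r hr)
    have h2 : ⁅q, J r⁆ = 0 := hneg q (memM q hq) (J r) (memM _ (hJp r hr))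
    rw [h1, h2, neg_zero]
  have habel : ∀ x y : g, ⁅J x, y⁆ = -⁅x, J y⁆ := by
    intro x y
    have ex : x = pplus E x + pminus E x := (hsum x).symm
    have ey : y = pplus E y + pminus E y := (hsum y).symm
    rw [ex, ey, map_add, map_add]
    simp only [add_lie, lie_add]
    rw [hA _ _ (hEp x) (hEp y), hC _ _ (hEp x) (hEm y),
      hD _ _ (hEm x) (hEp y), hB _ _ (hEm x) (hEm y)]
    abel
  -- centrality facts
  have hCJ : ∀ u : g, (∀ z : g, ⁅u, z⁆ = 0) → ∀ z : g, ⁅J u, z⁆ = 0 := by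
    intro u hu z
    rw [habel u z, hu (J z), neg_zero]
  have hCp : ∀ u : g, (∀ z : g, ⁅u, z⁆ = 0) → ∀ z : g, ⁅pplus E u, z⁆ = 0 := by
    intro u hu z
    have h1 : ⁅pplus E u, pplus E z⁆ = 0 :=
      hpos _ (memP _ (hEp u)) _ (memP _ (hEp z))
    have h2 : ⁅pminus E u, pminus E z⁆ = 0 :=
      hneg _ (memM _ (hEm u)) _ (memM _ (hEm z))
    have h4 : ⁅pplus E u, pminus E z⁆ = 0 := by
      have hpu : pplus E u = u - pminus E u := eq_sub_of_add_eq (hsum u)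
      rw [hpu, sub_lie, hu (pminus E z), h2, sub_zero]
    calc ⁅pplus E u, z⁆ = ⁅pplus E u, pplus E z + pminus E z⁆ := by rw [hsum z]
    _ = 0 := by rw [lie_add, h1, h4, add_zero]
  have hCm : ∀ u : g, (∀ z : g, ⁅u, z⁆ = 0) → ∀ z : g, ⁅pminus E u, z⁆ = 0 := by
    intro u hu z
    have h1 : ⁅pminus E u, pminus E z⁆ = 0 :=
      hneg _ (memM _ (hEm u)) _ (memM _ (hEm z))
    have h2 : ⁅pplus E u, pplus E z⁆ = 0 :=
      hpos _ (memP _ (hEp u)) _ (memP _ (hEp z))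
    have h4 : ⁅pminus E u, pplus E z⁆ = 0 := by
      have hpu : pminus E u = u - pplus E u :=
        eq_sub_of_add_eq (by rw [add_comm]; exact hsum u)
      rw [hpu, sub_lie, hu (pplus E z), h2, sub_zero]
    calc ⁅pminus E u, z⁆ = ⁅pminus E u, pplus E z + pminus E z⁆ := by rw [hsum z]
    _ = 0 := by rw [lie_add, h4, h1, add_zero]
  -- right brackets with central elements vanish
  have skew : ∀ u : g, (∀ z : g, ⁅u, z⁆ = 0) → ∀ z : g, ⁅z, u⁆ = 0 := by
    intro u hu z
    rw [← lie_skew, hu z, neg_zero]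
  -- ∇ₓ w = 0 if w is central
  have hzero2 : ∀ x w : g, (∀ z : g, ⁅w, z⁆ = 0) → cpConn J E x w = 0 := by
    intro x w hw
    have c1 : ⁅pplus E x, J (pplus E w)⁆ = 0 :=
      skew _ (hCJ _ (hCp _ hw)) _
    have c2 : ⁅pminus E x, J (pminus E w)⁆ = 0 :=
      skew _ (hCJ _ (hCm _ hw)) _
    have c3 : ⁅pplus E x, pminus E w⁆ = 0 := skew _ (hCm _ hw) _
    have c4 : ⁅pminus E x, pplus E w⁆ = 0 := skew _ (hCp _ hw) _
    rw [cpConn_apply', c1, c2, c3, c4]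
    simp
  -- ∇ₓ = 0 if x is central
  have hzero1 : ∀ x w : g, (∀ z : g, ⁅x, z⁆ = 0) → cpConn J E x w = 0 := by
    intro x w hx
    rw [cpConn_apply', hCp _ hx, hCm _ hx, hCp _ hx, hCm _ hx]
    simp
  -- ∇ₓ w is always central
  have hcen : ∀ x w z : g, ⁅cpConn J E x w, z⁆ = 0 := by
    intro x w z
    have t1 : ∀ z' : g, ⁅pplus E (J ⁅pplus E x, J (pplus E w)⁆), z'⁆ = 0 :=
      hCp _ (hCJ _ (h2step _ _))
    have t2 : ∀ z' : g, ⁅pminus E (J ⁅pminus E x, J (pminus E w)⁆), z'⁆ = 0 :=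
      hCm _ (hCJ _ (h2step _ _))
    have t3 : ∀ z' : g, ⁅pminus E ⁅pplus E x, pminus E w⁆, z'⁆ = 0 :=
      hCm _ (h2step _ _)
    have t4 : ∀ z' : g, ⁅pplus E ⁅pminus E x, pplus E w⁆, z'⁆ = 0 :=
      hCp _ (h2step _ _)
    rw [cpConn_apply']
    simp only [add_lie, sub_lie, neg_lie, t1 z, t2 z, t3 z, t4 z]
    simp
  -- conclusion
  intro x y
  ext z
  simp only [LinearMap.sub_apply, LinearMap.comp_apply, LinearMap.zero_apply]
  rw [hzero2 x _ (hcen y z), hzero2 y _ (hcen x z),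
    hzero1 ⁅x, y⁆ z (h2step x y)]
  simp
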